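/- arXiv:2411.18488 — 2 statements merged into one kernel-verified Lean document; each statement's English description precedes it below -/
import Mathlib

section
/- Let L = {ℓ_1,…,ℓ_k} be a line arrangement in the complex projective plane with k ≥ 10 lines, let q be the largest integer with t_q(L) ≠ 0, and suppose the lines ℓ_1,…,ℓ_q all pass through one common point. Assume t_{k−q+1}(L) = 0, k ≤ 2q − 2, and t_{k−q}(L) ≠ 0. Then the Levi graph G(L) contains an induced cycle of length 10 if and only if the lines ℓ_{q+1},…,ℓ_k have no common point, i.e. Sing(L) ∩ ℓ_{q+1} ∩ ⋯ ∩ ℓ_k = ∅. -/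
/-!
A 10-cycle in the Levi graph is a pentagon: five lines `j 0, …, j 4` and five points, the `s`-th
lying on `j s` and `j (s + 1)` only. Maximality of `q` forces `c` to lie on exactly the lines
`ℓ_0, …, ℓ_{q-1}`.

If the remaining lines share a point `d`, every line passes through `c` or `d`. Three of the five
pentagon lines then pass through the same point, and two of them are consecutive, so their common
pentagon vertex is that point and lies on the third line too: impossible.

Conversely, if the remaining lines have no common point, three of them `l₁, l₂, l₃` are not
concurrent. At least five lines pass through `c`, and each of the three points `lᵢ ∩ lⱼ` lies on at
most one of them, so two lines `a, b` through `c` miss all three points. No three of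
`a, l₁, b, l₂, l₃` are concurrent, so they are the lines of a pentagon.
-/

open scoped LinearAlgebra.Projectivization
open Projectivization

/-- The complex projective plane. -/
abbrev ProjPoint := ℙ ℂ (Fin 3 → ℂ)

/-- A subset of the projective plane is a (projective) line if it is the zero locus of a
nonzero linear form. -/
def IsProjLine (L : Set ProjPoint) : Prop :=
  ∃ f : (Fin 3 → ℂ) →ₗ[ℂ] ℂ, f ≠ 0 ∧ L = {p | p.submodule ≤ LinearMap.ker f}

/-- The line in the projective plane with equation `a*x + b*y + c*z = 0`. -/
def projLine (a b c : ℂ) : Set ProjPoint :=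
  {p : ProjPoint | ∀ v ∈ p.submodule, a * v 0 + b * v 1 + c * v 2 = 0}

/-- An arrangement of `k` distinct lines in the complex projective plane. -/
structure LineArrangement (k : ℕ) where
  line : Fin k → Set ProjPoint
  isLine : ∀ i, IsProjLine (line i)
  inj : Function.Injective line

namespace LineArrangement

variable {k : ℕ} (A : LineArrangement k)

/-- The multiplicity of a point: the number of lines of the arrangement passing through it. -/
noncomputable def mult (p : ProjPoint) : ℕ :=
  Set.ncard {i : Fin k | p ∈ A.line i}

/-- The singular points of the arrangement: points lying on at least two of the lines. -/
def sing : Set ProjPoint := {p | 2 ≤ A.mult p}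

/-- `A.t r` is the number of points of multiplicity exactly `r`. -/
noncomputable def t (r : ℕ) : ℕ := Set.ncard {p | A.mult p = r}

/-- The Levi graph of a line arrangement: the bipartite graph on `Sing(L) ⊔ L` where a point is
adjacent to a line iff the point lies on the line. -/
def levi : SimpleGraph (↥A.sing ⊕ Fin k) where
  Adj v w :=
    match v, w with
    | Sum.inl p, Sum.inr i => p.1 ∈ A.line i
    | Sum.inr i, Sum.inl p => p.1 ∈ A.line i
    | _, _ => False
  symm := by
    constructor
    rintro (p | i) (q | j) h <;> simp_all
  loopless := by
    constructor
    rintro (p | i) h <;> simp_all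

end LineArrangement

/-- A simple graph has an induced cycle of length `n` if there is an induced subgraph
isomorphic to the cycle graph `C_n`, i.e. a graph embedding of `C_n`. -/
def HasInducedCycle {V : Type*} (G : SimpleGraph V) (n : ℕ) : Prop :=
  Nonempty (SimpleGraph.cycleGraph n ↪g G)

open Finset SimpleGraph

lemma finrank_ker_of_ne_zero {K : Type*} [Field K] {n : ℕ} {f : (Fin (n + 1) → K) →ₗ[K] K}
    (hf : f ≠ 0) : Module.finrank K (LinearMap.ker f) = n := by
  have := Module.Dual.finrank_ker_add_one_of_ne_zero hf
  simp only [Module.finrank_fin_fun] at this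
  omega

namespace IsProjLine

variable {L₁ L₂ : Set ProjPoint}

lemma inter_nonempty (h₁ : IsProjLine L₁) (h₂ : IsProjLine L₂) : (L₁ ∩ L₂).Nonempty := by
  obtain ⟨f, hf, rfl⟩ := h₁
  obtain ⟨g, hg, rfl⟩ := h₂
  have hdim := Submodule.finrank_sup_add_finrank_inf_eq (LinearMap.ker f) (LinearMap.ker g)
  have hsup := (LinearMap.ker f ⊔ LinearMap.ker g).finrank_le
  rw [finrank_ker_of_ne_zero hf, finrank_ker_of_ne_zero hg] at hdim
  rw [Module.finrank_fin_fun] at hsup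
  have hinf : 1 ≤ Module.finrank ℂ ↥(LinearMap.ker f ⊓ LinearMap.ker g) := by omega
  obtain ⟨v, hv, hv0⟩ :=
    Submodule.exists_mem_ne_zero_of_ne_bot (Submodule.one_le_finrank_iff.1 hinf)
  refine ⟨Projectivization.mk ℂ v hv0, ?_, ?_⟩ <;>
    simp only [Set.mem_ofPred_eq, submodule_mk, Submodule.span_singleton_le_iff_mem]
  exacts [hv.1, hv.2]

lemma inter_subsingleton (h₁ : IsProjLine L₁) (h₂ : IsProjLine L₂) (hne : L₁ ≠ L₂) :
    (L₁ ∩ L₂).Subsingleton := by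
  obtain ⟨f, hf, rfl⟩ := h₁
  obtain ⟨g, hg, rfl⟩ := h₂
  have hlt : LinearMap.ker f ⊓ LinearMap.ker g < LinearMap.ker f := by
    refine inf_lt_left.2 fun hle => hne ?_
    rw [Submodule.eq_of_le_of_finrank_le hle
      (by rw [finrank_ker_of_ne_zero hf, finrank_ker_of_ne_zero hg])]
  have hinf : Module.finrank ℂ ↥(LinearMap.ker f ⊓ LinearMap.ker g) ≤ 1 := by
    have := Submodule.finrank_lt_finrank_of_lt hlt
    rw [finrank_ker_of_ne_zero hf] at this
    omega
  have hpoint : ∀ p ∈ {p : ProjPoint | p.submodule ≤ LinearMap.ker f} ∩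
      {p | p.submodule ≤ LinearMap.ker g}, p.submodule = LinearMap.ker f ⊓ LinearMap.ker g :=
    fun p hp => Submodule.eq_of_le_of_finrank_le (le_inf hp.1 hp.2)
      (hinf.trans_eq p.finrank_submodule.symm)
  exact fun p hp q hq => submodule_injective ((hpoint p hp).trans (hpoint q hq).symm)

end IsProjLine

namespace SimpleGraph

lemma cycleGraph_adj_add_right {n : ℕ} [NeZero n] (u v a : Fin n) :
    (cycleGraph n).Adj (u + a) (v + a) ↔ (cycleGraph n).Adj u v := by
  simp only [cycleGraph_adj', add_sub_add_right_eq_sub]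

lemma cycleGraph_adj_add_one {n : ℕ} (u : Fin (n + 2)) : (cycleGraph (n + 2)).Adj u (u + 1) :=
  cycleGraph_adj.2 (Or.inr (add_sub_cancel_left u 1))

end SimpleGraph

/-- Points of a pentagon (`inl`) sit at the odd positions of the 10-cycle, lines (`inr`) at the
even ones. -/
noncomputable def pentagonPos : Fin 5 ⊕ Fin 5 ≃ Fin 10 :=
  Equiv.ofBijective (Sum.elim (fun s => ⟨2 * s + 1, by omega⟩) (fun t => ⟨2 * t, by omega⟩))
    (by decide)

lemma cycleGraph_adj_pentagonPos_inl_inr (s t : Fin 5) :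
    (cycleGraph 10).Adj (pentagonPos (.inl s)) (pentagonPos (.inr t)) ↔ t = s ∨ t = s + 1 := by
  revert s t; decide

lemma not_cycleGraph_adj_pentagonPos_inl_inl (s s' : Fin 5) :
    ¬ (cycleGraph 10).Adj (pentagonPos (.inl s)) (pentagonPos (.inl s')) := by
  revert s s'; decide

lemma not_cycleGraph_adj_pentagonPos_inr_inr (t t' : Fin 5) :
    ¬ (cycleGraph 10).Adj (pentagonPos (.inr t)) (pentagonPos (.inr t')) := by
  revert t t'; decide

lemma exists_pentagonPos_phase {σ : Fin 10 → Bool} (hσ : ∀ i, σ (i + 1) = !σ i) :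
    ∃ a, ∀ s, σ (pentagonPos (.inl s) + a) = true ∧ σ (pentagonPos (.inr s) + a) = false := by
  have hperiod (i : Fin 10) (m : ℕ) : σ (i + m • 2) = σ i := by
    induction m with
    | zero => simp
    | succ m ih =>
      have h2 : i + m • 2 + 2 = i + m • 2 + 1 + 1 := by rw [add_assoc (i + m • 2)]; rfl
      rw [succ_nsmul, ← add_assoc, h2, hσ, hσ, Bool.not_not, ih]
  obtain ⟨a, ha, ha1⟩ : ∃ a, σ a = false ∧ σ (a + 1) = true := by
    cases h0 : σ 0
    · exact ⟨0, h0, by rw [zero_add, ← zero_add 1, hσ, h0]; rfl⟩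
    · exact ⟨1, by rw [← zero_add 1, hσ, h0]; rfl, by rw [hσ, ← zero_add 1, hσ, h0]; rfl⟩
  have hpos : ∀ a : Fin 10, ∀ s : Fin 5, pentagonPos (.inl s) + a = a + 1 + (s : ℕ) • 2 ∧
      pentagonPos (.inr s) + a = a + (s : ℕ) • 2 := by
    decide
  exact ⟨a, fun s => by rw [(hpos a s).1, (hpos a s).2, hperiod, hperiod, ha, ha1]; simp⟩

namespace LineArrangement

open scoped Classical

variable {k : ℕ} {A : LineArrangement k}

variable (A) in
lemma inter_nonempty (i j : Fin k) : (A.line i ∩ A.line j).Nonempty :=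
  (A.isLine i).inter_nonempty (A.isLine j)

lemma inter_subsingleton {i j : Fin k} (hij : i ≠ j) : (A.line i ∩ A.line j).Subsingleton :=
  (A.isLine i).inter_subsingleton (A.isLine j) (A.inj.ne hij)

lemma mult_eq_card (p : ProjPoint) : A.mult p = #{i | p ∈ A.line i} := by
  rw [mult, ← Set.ncard_coe_finset]
  simp

lemma mult_le (p : ProjPoint) : A.mult p ≤ k :=
  (A.mult_eq_card p).trans_le (card_filter_le _ _) |>.trans_eq (card_fin k)

lemma mem_sing_of_mem_inter {i j : Fin k} (hij : i ≠ j) {p : ProjPoint}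
    (hp : p ∈ A.line i ∩ A.line j) : p ∈ A.sing := by
  have : ({i, j} : Finset (Fin k)) ⊆ ({n | p ∈ A.line n} : Finset (Fin k)) := by
    simp [insert_subset_iff, hp.1, hp.2]
  simpa [sing, mult_eq_card, card_pair hij] using card_le_card this

lemma sing_finite : A.sing.Finite := by
  refine (Set.finite_iUnion fun i : Fin k => Set.finite_iUnion fun j : Fin k =>
    Set.finite_iUnion fun hij : i ≠ j => (inter_subsingleton (A := A) hij).finite).subset
    fun p hp => ?_
  obtain ⟨i, hi, j, hj, hij⟩ := one_lt_card.1 ((A.mult_eq_card p).symm.trans_ge hp)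
  simp only [mem_filter, mem_univ, true_and] at hi hj
  exact Set.mem_iUnion₂.2 ⟨i, j, Set.mem_iUnion.2 ⟨hij, hi, hj⟩⟩

lemma mult_le_of_forall_t_eq_zero {q : ℕ} (hq : ∀ r, q < r → A.t r = 0) {p : ProjPoint}
    (hp : p ∈ A.sing) : A.mult p ≤ q := by
  by_contra! hlt
  refine Set.ncard_ne_zero_of_mem (s := {x | A.mult x = A.mult p}) rfl ?_ (hq _ hlt)
  exact sing_finite.subset fun x (hx : A.mult x = A.mult p) =>
    (show p ∈ A.sing from hp).trans_eq hx.symm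

lemma min_le_mult_of_forall_mem {q : ℕ} {c : ProjPoint}
    (hc : ∀ i : Fin k, (i : ℕ) < q → c ∈ A.line i) : min k q ≤ A.mult c := by
  rw [mult_eq_card, ← Fin.card_filter_val_lt]
  exact card_le_card fun i => by simpa using hc i

lemma mem_line_iff_of_forall_t_eq_zero {q : ℕ} (hq : ∀ r, q < r → A.t r = 0) {c : ProjPoint}
    (hc : ∀ i : Fin k, (i : ℕ) < q → c ∈ A.line i) (h2 : 2 ≤ min k q) (i : Fin k) :
    c ∈ A.line i ↔ (i : ℕ) < q := by
  have hsub : ({i | (i : ℕ) < q} : Finset (Fin k)) ⊆ ({i | c ∈ A.line i} : Finset (Fin k)) :=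
    fun i => by simpa using hc i
  have hsing : c ∈ A.sing := h2.trans (min_le_mult_of_forall_mem hc)
  have heq := eq_of_subset_of_card_le hsub <| by
    rw [← mult_eq_card, Fin.card_filter_val_lt]
    exact le_min (mult_le c) (mult_le_of_forall_t_eq_zero hq hsing)
  simpa using (Finset.ext_iff.1 heq i).symm

@[simp]
lemma levi_adj_inl_inr {x : A.sing} {i : Fin k} : A.levi.Adj (.inl x) (.inr i) ↔ x.1 ∈ A.line i :=
  Iff.rfl

@[simp]
lemma not_levi_adj_inl_inl {x y : A.sing} : ¬ A.levi.Adj (.inl x) (.inl y) := id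

@[simp]
lemma not_levi_adj_inr_inr {i j : Fin k} : ¬ A.levi.Adj (.inr i) (.inr j) := id

lemma isLeft_eq_not_of_levi_adj {u v : A.sing ⊕ Fin k} (h : A.levi.Adj u v) :
    v.isLeft = !u.isLeft := by
  cases u <;> cases v <;> simp_all

variable (A) in
/-- The lines `j` and points `p` of an induced 10-cycle of the Levi graph, read in cyclic
order. -/
def IsPentagon (j : Fin 5 → Fin k) (p : Fin 5 → ProjPoint) : Prop :=
  ∀ s t, p s ∈ A.line (j t) ↔ t = s ∨ t = s + 1

namespace IsPentagon

variable {j : Fin 5 → Fin k} {p : Fin 5 → ProjPoint}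

lemma injective_line (hP : A.IsPentagon j p) : Function.Injective j := by
  intro s t hst
  have key : ∀ s t : Fin 5, (∀ u, s = u ∨ s = u + 1 ↔ t = u ∨ t = u + 1) → s = t := by decide
  exact key s t fun u => by rw [← hP, ← hP, hst]

lemma injective_point (hP : A.IsPentagon j p) : Function.Injective p := by
  intro s t hst
  have key : ∀ s t : Fin 5, (∀ u, u = s ∨ u = s + 1 ↔ u = t ∨ u = t + 1) → s = t := by decide
  exact key s t fun u => by rw [← hP, ← hP, hst]

lemma mem_sing (hP : A.IsPentagon j p) (s : Fin 5) : p s ∈ A.sing :=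
  mem_sing_of_mem_inter (hP.injective_line.ne (by simp))
    ⟨(hP s s).2 (.inl rfl), (hP s (s + 1)).2 (.inr rfl)⟩

lemma eq_or_eq_succ_of_mem (hP : A.IsPentagon j p) {x : ProjPoint} {s t : Fin 5}
    (hs : x ∈ A.line (j s)) (hs' : x ∈ A.line (j (s + 1))) (ht : x ∈ A.line (j t)) :
    t = s ∨ t = s + 1 := by
  have hx : x = p s := inter_subsingleton (hP.injective_line.ne (by simp)) ⟨hs, hs'⟩
    ⟨(hP s s).2 (.inl rfl), (hP s (s + 1)).2 (.inr rfl)⟩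
  exact (hP s t).1 (hx ▸ ht)

lemma hasInducedCycle (hP : A.IsPentagon j p) : HasInducedCycle A.levi 10 := by
  let φ : Fin 5 ⊕ Fin 5 → A.sing ⊕ Fin k := Sum.map (fun s => ⟨p s, hP.mem_sing s⟩) j
  have hφ : Function.Injective φ :=
    .sumMap (fun s t h => hP.injective_point (congrArg Subtype.val h)) hP.injective_line
  have hadj (u v) :
      A.levi.Adj (φ u) (φ v) ↔ (cycleGraph 10).Adj (pentagonPos u) (pentagonPos v) := by
    rcases u with s | t <;> rcases v with s' | t'
    · simpa [φ] using not_cycleGraph_adj_pentagonPos_inl_inl s s'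
    · simpa [φ, hP s t'] using (cycleGraph_adj_pentagonPos_inl_inr s t').symm
    · simpa [φ, hP s' t, adj_comm] using (cycleGraph_adj_pentagonPos_inl_inr s' t).symm
    · simpa [φ] using not_cycleGraph_adj_pentagonPos_inr_inr t t'
  refine ⟨⟨pentagonPos.symm.toEmbedding.trans ⟨φ, hφ⟩, fun {x y} => ?_⟩⟩
  simpa using hadj (pentagonPos.symm x) (pentagonPos.symm y)

end IsPentagon

lemma exists_isPentagon_of_hasInducedCycle (h : HasInducedCycle A.levi 10) :
    ∃ j p, A.IsPentagon j p := by
  obtain ⟨e⟩ := h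
  obtain ⟨a, ha⟩ := exists_pentagonPos_phase (σ := fun i => (e i).isLeft)
    fun i => isLeft_eq_not_of_levi_adj (e.map_rel_iff.2 (cycleGraph_adj_add_one i))
  choose p hp using fun s => Sum.isLeft_iff.1 (ha s).1
  choose j hj using fun t => Sum.isRight_iff.1 (by simpa using (ha t).2)
  refine ⟨j, fun s => (p s).1, fun s t => ?_⟩
  rw [← cycleGraph_adj_pentagonPos_inl_inr, ← cycleGraph_adj_add_right _ _ a, ← e.map_rel_iff,
    hp, hj, levi_adj_inl_inr]

lemma hasInducedCycle_levi_ten_iff : HasInducedCycle A.levi 10 ↔ ∃ j p, A.IsPentagon j p :=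
  ⟨exists_isPentagon_of_hasInducedCycle, fun ⟨_, _, hP⟩ => hP.hasInducedCycle⟩

lemma not_isPentagon_of_forall_mem_or_mem {c d : ProjPoint}
    (h : ∀ i, c ∈ A.line i ∨ d ∈ A.line i) (j : Fin 5 → Fin k) (p : Fin 5 → ProjPoint) :
    ¬ A.IsPentagon j p := by
  intro hP
  let colour : Fin 5 → Bool := fun t => decide (c ∈ A.line (j t))
  -- some colour class of a 2-colouring of the 5-cycle contains an edge and a third vertex
  have key : ∀ g : Fin 5 → Bool, ∃ s t, g (s + 1) = g s ∧ g t = g s ∧ t ≠ s ∧ t ≠ s + 1 := by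
    decide
  obtain ⟨s, t, hs, ht, hts, hts'⟩ := key colour
  obtain ⟨x, hx⟩ : ∃ x, ∀ u, colour u = colour s → x ∈ A.line (j u) := by
    by_cases hcs : c ∈ A.line (j s)
    · exact ⟨c, fun u hu => by simpa [colour, hcs] using hu⟩
    · exact ⟨d, fun u hu => (h (j u)).resolve_left (by simpa [colour, hcs] using hu)⟩
  exact (hP.eq_or_eq_succ_of_mem (hx s rfl) (hx _ hs) (hx t ht)).elim hts hts'

lemma not_hasInducedCycle_ten_of_forall_mem_or_mem {c d : ProjPoint}
    (h : ∀ i, c ∈ A.line i ∨ d ∈ A.line i) : ¬ HasInducedCycle A.levi 10 := by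
  rw [hasInducedCycle_levi_ten_iff]
  rintro ⟨j, p, hP⟩
  exact not_isPentagon_of_forall_mem_or_mem h j p hP

lemma exists_two_lines_through_avoiding {c : ProjPoint} (X : Finset ProjPoint) (hcX : c ∉ X)
    (hX : #X + 2 ≤ A.mult c) :
    ∃ a b, a ≠ b ∧ c ∈ A.line a ∧ c ∈ A.line b ∧ ∀ x ∈ X, x ∉ A.line a ∧ x ∉ A.line b := by
  rw [mult_eq_card] at hX
  set S : Finset (Fin k) := {i | c ∈ A.line i}
  set bad := X.biUnion fun x => {i ∈ S | x ∈ A.line i}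
  have hbad : #bad ≤ #X := by
    refine (card_biUnion_le_card_mul _ _ 1 fun x hx => card_le_one.2 fun i hi i' hi' => ?_).trans_eq
      (mul_one #X)
    simp only [S, mem_filter, mem_univ, true_and] at hi hi'
    by_contra hii'
    exact hcX (inter_subsingleton hii' ⟨hi.2, hi'.2⟩ ⟨hi.1, hi'.1⟩ ▸ hx)
  have : 1 < #(S \ bad) := by
    have := le_card_sdiff bad S
    omega
  obtain ⟨a, ha, b, hb, hab⟩ := one_lt_card.1 this
  simp only [bad, S, mem_sdiff, mem_filter, mem_univ, true_and, mem_biUnion, not_exists,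
    not_and] at ha hb
  exact ⟨a, b, hab, ha.1, hb.1, fun x hx => ⟨ha.2 x hx ha.1, hb.2 x hx hb.1⟩⟩

lemma exists_isPentagon_of_forall_eq_or_eq_succ {j : Fin 5 → Fin k}
    (h : ∀ x s t, x ∈ A.line (j s) → x ∈ A.line (j (s + 1)) → x ∈ A.line (j t) →
      t = s ∨ t = s + 1) :
    ∃ p, A.IsPentagon j p := by
  choose p hp using fun s => A.inter_nonempty (j s) (j (s + 1))
  refine ⟨p, fun s t => ⟨h _ s t (hp s).1 (hp s).2, ?_⟩⟩
  rintro (rfl | rfl)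
  exacts [(hp _).1, (hp _).2]

lemma exists_three_lines_of_forall_exists_not_mem {c : ProjPoint} (hc : c ∈ A.sing)
    (h : ∀ x ∈ A.sing, ∃ i, c ∉ A.line i ∧ x ∉ A.line i) :
    ∃ l₁ l₂ l₃ d, l₁ ≠ l₂ ∧ c ∉ A.line l₁ ∧ c ∉ A.line l₂ ∧ c ∉ A.line l₃ ∧
      d ∈ A.line l₁ ∧ d ∈ A.line l₂ ∧ d ∉ A.line l₃ := by
  obtain ⟨l₁, hcl₁, -⟩ := h c hc
  obtain ⟨m, hcm⟩ : ∃ m, c ∈ A.line m := by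
    by_contra! hm
    simp [sing, mult, hm] at hc
  obtain ⟨x, hx⟩ := A.inter_nonempty m l₁
  obtain ⟨l₂, hcl₂, hxl₂⟩ := h x (mem_sing_of_mem_inter (by rintro rfl; exact hcl₁ hcm) hx)
  have hl₁₂ : l₁ ≠ l₂ := fun h => hxl₂ (h ▸ hx.2)
  obtain ⟨d, hd⟩ := A.inter_nonempty l₁ l₂
  obtain ⟨l₃, hcl₃, hdl₃⟩ := h d (mem_sing_of_mem_inter hl₁₂ hd)
  exact ⟨l₁, l₂, l₃, d, hl₁₂, hcl₁, hcl₂, hcl₃, hd.1, hd.2, hdl₃⟩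

lemma exists_isPentagon_of_forall_exists_not_mem {c : ProjPoint} (hc : 5 ≤ A.mult c)
    (h : ∀ x ∈ A.sing, ∃ i, c ∉ A.line i ∧ x ∉ A.line i) :
    ∃ j p, A.IsPentagon j p := by
  obtain ⟨l₁, l₂, l₃, d, hl₁₂, hcl₁, hcl₂, hcl₃, hdl₁, hdl₂, hdl₃⟩ :=
    exists_three_lines_of_forall_exists_not_mem (show 2 ≤ A.mult c by omega) h
  obtain ⟨v, hvl₂, hvl₃⟩ := A.inter_nonempty l₂ l₃
  obtain ⟨w, hwl₁, hwl₃⟩ := A.inter_nonempty l₁ l₃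
  have hcX : c ∉ ({d, v, w} : Finset ProjPoint) := by
    simp only [mem_insert, mem_singleton]
    rintro (rfl | rfl | rfl) <;> contradiction
  obtain ⟨a, b, hab, hca, hcb, hX⟩ :=
    exists_two_lines_through_avoiding _ hcX ((Nat.add_le_add_right card_le_three 2).trans hc)
  simp only [mem_insert, mem_singleton, forall_eq_or_imp, forall_eq] at hX
  obtain ⟨⟨hda, hdb⟩, ⟨hva, hvb⟩, ⟨hwa, hwb⟩⟩ := hX
  -- any three of the five lines contain `a, b` or two of the `lᵢ`, which meet in `c`, `d`, `v`
  -- or `w`; that point misses the third line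
  have hc' : ∀ x, x ∈ A.line a → x ∈ A.line b → x = c := fun x hxa hxb =>
    inter_subsingleton hab ⟨hxa, hxb⟩ ⟨hca, hcb⟩
  have hd' : ∀ x, x ∈ A.line l₁ → x ∈ A.line l₂ → x = d := fun x hx₁ hx₂ =>
    inter_subsingleton hl₁₂ ⟨hx₁, hx₂⟩ ⟨hdl₁, hdl₂⟩
  have hv' : ∀ x, x ∈ A.line l₂ → x ∈ A.line l₃ → x = v := fun x hx₂ hx₃ =>
    inter_subsingleton (by rintro rfl; exact hdl₃ hdl₂) ⟨hx₂, hx₃⟩ ⟨hvl₂, hvl₃⟩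
  have hw' : ∀ x, x ∈ A.line l₁ → x ∈ A.line l₃ → x = w := fun x hx₁ hx₃ =>
    inter_subsingleton (by rintro rfl; exact hdl₃ hdl₁) ⟨hx₁, hx₃⟩ ⟨hwl₁, hwl₃⟩
  refine ⟨![a, l₁, b, l₂, l₃], exists_isPentagon_of_forall_eq_or_eq_succ fun x s t => ?_⟩
  fin_cases s <;> fin_cases t <;>
    simp only [Fin.isValue, Fin.reduceFinMk, Fin.zero_eta, Fin.mk_one, Fin.reduceAdd, zero_add,
      Matrix.cons_val, Matrix.cons_val_zero, Matrix.cons_val_one, Fin.reduceEq, one_ne_zero,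
      zero_ne_one, or_self, or_true, or_false, imp_false, implies_true] <;>
    grind

end LineArrangement

theorem inducedCycle_ten_iff_no_common_point_general (k q : ℕ) (hk : 10 ≤ k)
    (A : LineArrangement k)
    (hqmax : ∀ r : ℕ, q < r → A.t r = 0)
    (c : ProjPoint) (hc : ∀ i : Fin k, (i : ℕ) < q → c ∈ A.line i)
    (h3 : k ≤ 2 * q - 2) :
    HasInducedCycle A.levi 10 ↔
      {p ∈ A.sing | ∀ i : Fin k, q ≤ (i : ℕ) → p ∈ A.line i} = ∅ := by
  have hcq := LineArrangement.mem_line_iff_of_forall_t_eq_zero hqmax hc (by omega)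
  rw [Set.eq_empty_iff_forall_notMem]
  constructor
  · rintro hcycle d ⟨-, hd⟩
    exact LineArrangement.not_hasInducedCycle_ten_of_forall_mem_or_mem
      (fun i => (lt_or_ge (i : ℕ) q).imp (hc i) (hd i)) hcycle
  · intro hempty
    refine LineArrangement.hasInducedCycle_levi_ten_iff.2 <|
      LineArrangement.exists_isPentagon_of_forall_exists_not_mem
        ((show 5 ≤ min k q by omega).trans (LineArrangement.min_le_mult_of_forall_mem hc))
        fun x hx => ?_
    by_contra! hall
    exact hempty x ⟨hx, fun i hi => hall i (by rw [hcq]; omega)⟩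

/-- `k ≥ 10` lines, `q` maximal with `t_q ≠ 0`, lines `ℓ_0, …, ℓ_{q-1}` through
a common point, `t_{k-q+1} = 0`, `k ≤ 2q - 2` and `t_{k-q} ≠ 0`. Then the Levi graph has an
induced cycle of length `10` iff the remaining lines `ℓ_q, …, ℓ_{k-1}` have no common
singular point. -/
theorem inducedCycle_ten_iff_no_common_point (k q : ℕ) (hk : 10 ≤ k)
    (A : LineArrangement k)
    (htq : A.t q ≠ 0) (hqmax : ∀ r : ℕ, q < r → A.t r = 0)
    (c : ProjPoint) (hc : ∀ i : Fin k, (i : ℕ) < q → c ∈ A.line i)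
    (h2 : A.t (k - q + 1) = 0) (h3 : k ≤ 2 * q - 2) (h4 : A.t (k - q) ≠ 0) :
    HasInducedCycle A.levi 10 ↔
      {p ∈ A.sing | ∀ i : Fin k, q ≤ (i : ℕ) → p ∈ A.line i} = ∅ :=
  inducedCycle_ten_iff_no_common_point_general k q hk A hqmax c hc h3
end

section
/- Let L be a line arrangement of k distinct lines in the complex projective plane with k odd, k ≥ 5, t_3(L) ≠ 0 and t_r(L) = 0 for all r > 3. Then the Levi graph G(L) contains an induced cycle of length 2i for every integer i with 3 ≤ i ≤ ⌊(k+9)/4⌋. -/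
open scoped LinearAlgebra.Projectivization
open Projectivization

/-!
Every point has multiplicity at most `3`, so a point lying on two lines of a set `L` of lines lies
on at most one line outside `L`. Call lines `ℓ 0, …, ℓ m` an induced path if each meet
`ℓ s ∩ ℓ (s + 1)` lies on no other `ℓ u`. A line `j` extends such a path to an induced path that
moreover closes up into an induced polygon `ℓ 0, …, ℓ m, j` as soon as `j` avoids the `m + 1` path
lines and the at most `3m - 3` meets `ℓ s ∩ ℓ (s + 1)`, `ℓ 0 ∩ ℓ u`, `ℓ u ∩ ℓ m`. These forbid at
most `4m - 2` lines, so greedy choices succeed while `4m - 2 < k`, which gives induced polygons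
with `n` sides whenever `4n ≤ k + 9`. The sides and vertices of an induced polygon with `n` sides
form an induced cycle of length `2n` in the Levi graph.
-/

theorem Fin.eq_add_one_iff_val {n : ℕ} {x y : Fin (n + 1)} :
    x = y + 1 ↔ x.val = y.val + 1 ∨ (x.val = 0 ∧ y.val = n) := by
  rw [Fin.ext_iff, Fin.val_add_one]
  split_ifs with h <;> simp only [Fin.ext_iff, Fin.val_last] at h <;> omega

namespace SimpleGraph

theorem cycleGraph_adj_iff_val {n : ℕ} {x y : Fin (n + 2)} :
    (cycleGraph (n + 2)).Adj x y ↔ x.val = y.val + 1 ∨ y.val = x.val + 1 ∨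
      (x.val = 0 ∧ y.val = n + 1) ∨ (y.val = 0 ∧ x.val = n + 1) := by
  rw [cycleGraph_adj, sub_eq_iff_eq_add', sub_eq_iff_eq_add', Fin.eq_add_one_iff_val,
    Fin.eq_add_one_iff_val]
  tauto

theorem hasInducedCycle_of_alternating {V : Type*} {G : SimpleGraph V} {m : ℕ} (hm : 2 ≤ m)
    (a b : Fin (m + 1) → V) (ha : Function.Injective a)
    (haa : ∀ s u, ¬G.Adj (a s) (a u)) (hbb : ∀ s u, ¬G.Adj (b s) (b u))
    (hab : ∀ s u, G.Adj (a u) (b s) ↔ u = s ∨ u = s + 1) :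
    HasInducedCycle G (2 * m + 2) := by
  simp only [Fin.eq_add_one_iff_val] at hab
  simp only [Fin.ext_iff] at hab
  have hb : Function.Injective b := fun s u hsu => by
    have hs := (hab u s).1 (hsu ▸ (hab s s).2 (Or.inl rfl))
    have hu := (hab s u).1 (hsu ▸ (hab u u).2 (Or.inl rfl))
    exact Fin.ext (by omega)
  have hab_ne : ∀ s u, a s ≠ b u := fun s u hsu =>
    haa u s (hsu ▸ (hab u u).2 (Or.inl rfl))
  let φ : Fin (2 * m + 2) → V := fun x =>
    if x.val % 2 = 0 then a ⟨x / 2, by omega⟩ else b ⟨x / 2, by omega⟩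
  refine ⟨⟨⟨φ, fun x y hxy => ?_⟩, fun {x y} => ?_⟩⟩
  · simp only [φ] at hxy
    split_ifs at hxy with hx hy hy
    · have := Fin.ext_iff.1 (ha hxy); simp only at this; exact Fin.ext (by omega)
    · exact absurd hxy (hab_ne _ _)
    · exact absurd hxy.symm (hab_ne _ _)
    · have := Fin.ext_iff.1 (hb hxy); simp only at this; exact Fin.ext (by omega)
  · change G.Adj (φ x) (φ y) ↔ _
    rw [cycleGraph_adj_iff_val]
    simp only [φ]
    split_ifs with hx hy hy
    · exact iff_of_false (haa _ _) (by omega)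
    · rw [hab]; simp only; omega
    · rw [G.adj_comm, hab]; simp only; omega
    · exact iff_of_false (hbb _ _) (by omega)

end SimpleGraph

namespace IsProjLine

theorem exists_submodule {L : Set ProjPoint} (h : IsProjLine L) :
    ∃ W : Submodule ℂ (Fin 3 → ℂ), Module.finrank ℂ W = 2 ∧ L = {p | p.submodule ≤ W} := by
  obtain ⟨f, hf, rfl⟩ := h
  refine ⟨LinearMap.ker f, ?_, rfl⟩
  have := Module.Dual.finrank_ker_add_one_of_ne_zero hf
  simp only [Module.finrank_fin_fun] at this
  omega

theorem exists_mem_inter {L₁ L₂ : Set ProjPoint} (h₁ : IsProjLine L₁) (h₂ : IsProjLine L₂) :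
    ∃ p, p ∈ L₁ ∧ p ∈ L₂ := by
  obtain ⟨W₁, hW₁, rfl⟩ := h₁.exists_submodule
  obtain ⟨W₂, hW₂, rfl⟩ := h₂.exists_submodule
  have hsup : Module.finrank ℂ ↥(W₁ ⊔ W₂) ≤ 3 := by
    simpa using Submodule.finrank_le (W₁ ⊔ W₂)
  have hinf := Submodule.finrank_sup_add_finrank_inf_eq W₁ W₂
  obtain ⟨v, hv, hv0⟩ := Submodule.exists_mem_ne_zero_of_ne_bot
    ((Submodule.one_le_finrank_iff (S := W₁ ⊓ W₂)).1 (by omega))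
  refine ⟨Projectivization.mk ℂ v hv0, ?_, ?_⟩ <;>
    simp only [Set.mem_ofPred_eq, Projectivization.submodule_mk,
      Submodule.span_singleton_le_iff_mem]
  exacts [(Submodule.mem_inf.1 hv).1, (Submodule.mem_inf.1 hv).2]

theorem eq_of_mem_of_mem {L₁ L₂ : Set ProjPoint} (h₁ : IsProjLine L₁) (h₂ : IsProjLine L₂)
    {p q : ProjPoint} (hpq : p ≠ q) (hp₁ : p ∈ L₁) (hp₂ : p ∈ L₂) (hq₁ : q ∈ L₁) (hq₂ : q ∈ L₂) :
    L₁ = L₂ := by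
  obtain ⟨W₁, hW₁, rfl⟩ := h₁.exists_submodule
  obtain ⟨W₂, hW₂, rfl⟩ := h₂.exists_submodule
  suffices W₁ = W₂ by rw [this]
  by_contra hW
  have hinf : Module.finrank ℂ ↥(W₁ ⊓ W₂) ≤ 1 := by
    by_contra! h
    have e₁ := Submodule.eq_of_le_of_finrank_le (inf_le_left : W₁ ⊓ W₂ ≤ W₁) (by omega)
    have e₂ := Submodule.eq_of_le_of_finrank_le (inf_le_right : W₁ ⊓ W₂ ≤ W₂) (by omega)
    exact hW (e₁.symm.trans e₂)
  have hpt : ∀ r : ProjPoint, r.submodule ≤ W₁ → r.submodule ≤ W₂ → r.submodule = W₁ ⊓ W₂ :=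
    fun r h₁ h₂ => Submodule.eq_of_le_of_finrank_le (le_inf h₁ h₂)
      (by rw [Projectivization.finrank_submodule]; exact hinf)
  exact hpq (Projectivization.submodule_injective ((hpt p hp₁ hp₂).trans (hpt q hq₁ hq₂).symm))

end IsProjLine

namespace LineArrangement

variable {k : ℕ} (A : LineArrangement k)

open Finset

theorem eq_of_mem_line {i j : Fin k} (hij : i ≠ j) {p q : ProjPoint} (hpi : p ∈ A.line i)
    (hpj : p ∈ A.line j) (hqi : q ∈ A.line i) (hqj : q ∈ A.line j) : p = q := by
  by_contra hpq
  exact hij (A.inj ((A.isLine i).eq_of_mem_of_mem (A.isLine j) hpq hpi hpj hqi hqj))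

/-- A common point of the lines `i` and `j`: unique if `i ≠ j`, an arbitrary point of the line if
`i = j`. -/
noncomputable def meet (i j : Fin k) : ProjPoint :=
  ((A.isLine i).exists_mem_inter (A.isLine j)).choose

theorem meet_mem_left (i j : Fin k) : A.meet i j ∈ A.line i :=
  ((A.isLine i).exists_mem_inter (A.isLine j)).choose_spec.1

theorem meet_mem_right (i j : Fin k) : A.meet i j ∈ A.line j :=
  ((A.isLine i).exists_mem_inter (A.isLine j)).choose_spec.2

theorem meet_mem_of_mem {i i' j : Fin k} (hii' : i ≠ i') {p : ProjPoint} (hpi : p ∈ A.line i)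
    (hpi' : p ∈ A.line i') (hpj : p ∈ A.line j) : A.meet i i' ∈ A.line j :=
  A.eq_of_mem_line hii' hpi hpi' (A.meet_mem_left i i') (A.meet_mem_right i i') ▸ hpj

open Classical in
noncomputable def through (p : ProjPoint) : Finset (Fin k) :=
  Finset.univ.filter fun i => p ∈ A.line i

theorem mem_through {p : ProjPoint} {i : Fin k} : i ∈ A.through p ↔ p ∈ A.line i := by
  simp [through]

theorem card_through (p : ProjPoint) : (A.through p).card = A.mult p := by
  rw [mult, ← Set.ncard_coe_finset]
  congr
  ext i
  exact A.mem_through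

theorem setOf_mult_eq_finite {r : ℕ} (hr : 2 ≤ r) : {p | A.mult p = r}.Finite := by
  refine (Set.finite_range fun ij : Fin k × Fin k => A.meet ij.1 ij.2).subset fun p hp => ?_
  rw [Set.mem_ofPred_eq, ← card_through] at hp
  obtain ⟨i, hi, j, hj, hij⟩ := Finset.one_lt_card.1 (hp ▸ hr)
  exact ⟨(i, j), A.eq_of_mem_line hij (A.meet_mem_left i j) (A.meet_mem_right i j)
    (A.mem_through.1 hi) (A.mem_through.1 hj)⟩

-- `Set.ncard` vanishes on infinite sets, so `A.t r = 0` alone would not exclude points of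
-- multiplicity `r`: the finiteness above is needed.
theorem mult_le_three (hr : ∀ r : ℕ, 3 < r → A.t r = 0) (p : ProjPoint) : A.mult p ≤ 3 := by
  by_contra! h
  have := (Set.ncard_pos (A.setOf_mult_eq_finite (r := A.mult p) (by omega))).2 ⟨p, rfl⟩
  rw [← t, hr _ h] at this
  exact this.false

theorem meet_mem_sing {i j : Fin k} (hij : i ≠ j) : A.meet i j ∈ A.sing := by
  rw [sing, Set.mem_ofPred_eq, ← card_through, ← Finset.card_pair hij]
  refine Finset.card_le_card fun l hl => ?_
  rcases Finset.mem_insert.1 hl with rfl | hl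
  · exact A.mem_through.2 (A.meet_mem_left _ _)
  · rw [Finset.mem_singleton.1 hl]; exact A.mem_through.2 (A.meet_mem_right _ _)

theorem card_through_sdiff_le_one {p : ProjPoint} (hp : A.mult p ≤ 3) {L : Finset (Fin k)}
    {i j : Fin k} (hij : i ≠ j) (hi : i ∈ L) (hj : j ∈ L) (hpi : p ∈ A.line i)
    (hpj : p ∈ A.line j) : (A.through p \ L).card ≤ 1 := by
  have hsub : {i, j} ⊆ L ∩ A.through p := by
    intro l hl
    rcases mem_insert.1 hl with rfl | hl
    · exact mem_inter.2 ⟨hi, A.mem_through.2 hpi⟩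
    · rw [mem_singleton.1 hl]; exact mem_inter.2 ⟨hj, A.mem_through.2 hpj⟩
  have := card_le_card hsub
  rw [card_pair hij] at this
  rw [card_sdiff, card_through]
  omega

theorem exists_line_avoiding (hm3 : ∀ p, A.mult p ≤ 3) (L : Finset (Fin k))
    (Q : Finset ProjPoint)
    (hQ : ∀ q ∈ Q, ∃ i ∈ L, ∃ j ∈ L, i ≠ j ∧ q ∈ A.line i ∧ q ∈ A.line j)
    (hk : L.card + Q.card < k) : ∃ j ∉ L, ∀ q ∈ Q, q ∉ A.line j := by
  set bad := L ∪ Q.biUnion fun q => A.through q \ L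
  have hbad : bad.card < (univ : Finset (Fin k)).card := calc
    bad.card ≤ L.card + ∑ q ∈ Q, (A.through q \ L).card :=
      (card_union_le _ _).trans (Nat.add_le_add_left card_biUnion_le _)
    _ ≤ L.card + ∑ _q ∈ Q, 1 := by
      gcongr with q hq
      obtain ⟨i, hi, j, hj, hij, hqi, hqj⟩ := hQ q hq
      exact A.card_through_sdiff_le_one (hm3 q) hij hi hj hqi hqj
    _ < _ := by simpa using hk
  obtain ⟨j, -, hj⟩ := exists_mem_notMem_of_card_lt_card hbad
  have hjL : j ∉ L := fun h => hj (mem_union_left _ h)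
  exact ⟨j, hjL, fun q hq hqj => hj (mem_union_right _
    (mem_biUnion.2 ⟨q, hq, mem_sdiff.2 ⟨A.mem_through.2 hqj, hjL⟩⟩))⟩

structure IsInducedPath (ℓ : ℕ → Fin k) (m : ℕ) : Prop where
  injOn : Set.InjOn ℓ (Set.Iic m)
  eq_of_meet_mem : ∀ s < m, ∀ u ≤ m,
    A.meet (ℓ s) (ℓ (s + 1)) ∈ A.line (ℓ u) → u = s ∨ u = s + 1

/-- The polygon has the `m + 1` sides `ℓ 0, …, ℓ m`. -/
structure IsInducedPolygon (ℓ : ℕ → Fin k) (m : ℕ) : Prop extends A.IsInducedPath ℓ m where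
  meet_last_not_mem : ∀ u, 0 < u → u < m → A.meet (ℓ m) (ℓ 0) ∉ A.line (ℓ u)

/-- The index ranges are chosen so that no meet is listed twice. -/
noncomputable def criticalPoints (ℓ : ℕ → Fin k) (m : ℕ) : Finset ProjPoint := by
  classical exact
    (range m).image (fun s => A.meet (ℓ s) (ℓ (s + 1))) ∪
      (Icc 2 m).image (fun u => A.meet (ℓ 0) (ℓ u)) ∪
      (Ioo 0 (m - 1)).image (fun u => A.meet (ℓ u) (ℓ m))

variable {A} {ℓ : ℕ → Fin k} {m : ℕ}

theorem card_criticalPoints_le : (A.criticalPoints ℓ m).card ≤ m + (m - 1) + (m - 2) := by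
  classical
  refine (card_union_le _ _).trans (Nat.add_le_add ((card_union_le _ _).trans
    (Nat.add_le_add card_image_le card_image_le)) card_image_le) |>.trans ?_
  simp only [card_range, Nat.card_Icc, Nat.card_Ioo]
  omega

theorem meet_succ_mem_criticalPoints {s : ℕ} (hs : s < m) :
    A.meet (ℓ s) (ℓ (s + 1)) ∈ A.criticalPoints ℓ m := by
  simp only [criticalPoints, mem_union, mem_image, mem_range]
  exact Or.inl (Or.inl ⟨s, hs, rfl⟩)

theorem meet_last_mem_criticalPoints {u : ℕ} (hu : u < m) :
    A.meet (ℓ u) (ℓ m) ∈ A.criticalPoints ℓ m := by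
  obtain rfl | ⟨rfl, hm⟩ | hu' : u + 1 = m ∨ u = 0 ∧ 2 ≤ m ∨ 0 < u ∧ u < m - 1 := by omega
  · exact meet_succ_mem_criticalPoints hu
  · simp only [criticalPoints, mem_union, mem_image, mem_Icc]
    exact Or.inl (Or.inr ⟨m, ⟨hm, le_rfl⟩, rfl⟩)
  · simp only [criticalPoints, mem_union, mem_image, mem_Ioo]
    exact Or.inr ⟨u, hu', rfl⟩

theorem meet_first_mem_criticalPoints {u : ℕ} (hu₀ : 0 < u) (hu : u ≤ m) :
    A.meet (ℓ 0) (ℓ u) ∈ A.criticalPoints ℓ m := by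
  obtain rfl | hu' : u = 1 ∨ 2 ≤ u := by omega
  · exact meet_succ_mem_criticalPoints hu
  · simp only [criticalPoints, mem_union, mem_image, mem_Icc]
    exact Or.inl (Or.inr ⟨u, ⟨hu', hu⟩, rfl⟩)

namespace IsInducedPath

theorem exists_of_mem_criticalPoints (h : A.IsInducedPath ℓ m) {q : ProjPoint}
    (hq : q ∈ A.criticalPoints ℓ m) :
    ∃ i ∈ (range (m + 1)).image ℓ, ∃ j ∈ (range (m + 1)).image ℓ,
      i ≠ j ∧ q ∈ A.line i ∧ q ∈ A.line j := by
  have hmeet : ∀ a ≤ m, ∀ b ≤ m, a ≠ b → ∃ i ∈ (range (m + 1)).image ℓ,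
      ∃ j ∈ (range (m + 1)).image ℓ, i ≠ j ∧
        A.meet (ℓ a) (ℓ b) ∈ A.line i ∧ A.meet (ℓ a) (ℓ b) ∈ A.line j :=
    fun a ha b hb hab => ⟨ℓ a, mem_image_of_mem ℓ (mem_range.2 (by omega)),
      ℓ b, mem_image_of_mem ℓ (mem_range.2 (by omega)), fun h' => hab (h.injOn ha hb h'),
      A.meet_mem_left _ _, A.meet_mem_right _ _⟩
  simp only [criticalPoints, mem_union, mem_image, mem_range, mem_Icc, mem_Ioo] at hq
  obtain ((⟨s, hs, rfl⟩ | ⟨u, hu, rfl⟩) | ⟨u, hu, rfl⟩) := hq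
  · exact hmeet s (by omega) (s + 1) (by omega) (by omega)
  · exact hmeet 0 (by omega) u hu.2 (by omega)
  · exact hmeet u (by omega) m le_rfl (by omega)

theorem isInducedPolygon_update (h : A.IsInducedPath ℓ m) {j : Fin k}
    (hjℓ : j ∉ (range (m + 1)).image ℓ) (hjQ : ∀ q ∈ A.criticalPoints ℓ m, q ∉ A.line j) :
    A.IsInducedPolygon (Function.update ℓ (m + 1) j) (m + 1) := by
  have hold : ∀ u ≤ m, Function.update ℓ (m + 1) j u = ℓ u :=
    fun u hu => Function.update_of_ne (by omega) _ _
  have hnew : Function.update ℓ (m + 1) j (m + 1) = j := Function.update_self _ _ _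
  have hjne : ∀ u ≤ m, ℓ u ≠ j :=
    fun u hu hu' => hjℓ (mem_image.2 ⟨u, mem_range.2 (by omega), hu'⟩)
  have hℓne : ∀ a ≤ m, ∀ b ≤ m, a ≠ b → ℓ a ≠ ℓ b :=
    fun a ha b hb hab h' => hab (h.injOn ha hb h')
  -- A meet of `j` with `ℓ a` lying on another path line `ℓ b` would put `ℓ a ∩ ℓ b` on `j`.
  refine ⟨⟨fun s hs u hu hsu => ?_, fun s hs u hu hmem => ?_⟩, fun u hu₀ hu hmem => ?_⟩
  · simp only [Set.mem_Iic] at hs hu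
    rcases Nat.le_add_one_iff.1 hs with hs | rfl <;> rcases Nat.le_add_one_iff.1 hu with hu | rfl
    · rw [hold s hs, hold u hu] at hsu; exact h.injOn hs hu hsu
    · rw [hold s hs, hnew] at hsu; exact absurd hsu (hjne s hs)
    · rw [hold u hu, hnew] at hsu; exact absurd hsu.symm (hjne u hu)
    · rfl
  · rcases Nat.lt_add_one_iff_lt_or_eq.1 hs with hs | rfl
    · rw [hold s hs.le, hold (s + 1) hs] at hmem
      rcases Nat.le_add_one_iff.1 hu with hu | rfl
      · rw [hold u hu] at hmem; exact h.eq_of_meet_mem s hs u hu hmem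
      · rw [hnew] at hmem; exact absurd hmem (hjQ _ (meet_succ_mem_criticalPoints hs))
    · rw [hold s le_rfl, hnew] at hmem
      rcases Nat.le_add_one_iff.1 hu with hu | rfl
      · obtain hu | rfl := Nat.lt_or_eq_of_le hu
        · rw [hold u hu.le] at hmem
          exact (hjQ _ (meet_last_mem_criticalPoints hu) (A.meet_mem_of_mem
            (hℓne u hu.le s le_rfl hu.ne) hmem (A.meet_mem_left _ _) (A.meet_mem_right _ _))).elim
        · exact Or.inl rfl
      · exact Or.inr rfl
  · rw [hnew, hold 0 (Nat.zero_le _), hold u (by omega)] at hmem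
    exact hjQ _ (meet_first_mem_criticalPoints hu₀ (by omega)) (A.meet_mem_of_mem
      (hℓne 0 (Nat.zero_le _) u (by omega) hu₀.ne) (A.meet_mem_right _ _) hmem
      (A.meet_mem_left _ _))

theorem exists_isInducedPolygon_update (hm3 : ∀ p, A.mult p ≤ 3) (h : A.IsInducedPath ℓ m)
    (hk : m + 1 + (m + (m - 1) + (m - 2)) < k) :
    ∃ j, A.IsInducedPolygon (Function.update ℓ (m + 1) j) (m + 1) := by
  obtain ⟨j, hjℓ, hjQ⟩ := A.exists_line_avoiding hm3 ((range (m + 1)).image ℓ)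
    (A.criticalPoints ℓ m) (fun _ hq => h.exists_of_mem_criticalPoints hq) <| by
      have := (card_image_le (s := range (m + 1)) (f := ℓ)).trans (card_range _).le
      have := card_criticalPoints_le (A := A) (ℓ := ℓ) (m := m)
      omega
  exact ⟨j, h.isInducedPolygon_update hjℓ hjQ⟩

end IsInducedPath

theorem exists_isInducedPolygon (hm3 : ∀ p, A.mult p ≤ 3) :
    ∀ m, m + 1 + (m + (m - 1) + (m - 2)) < k → ∃ ℓ, A.IsInducedPolygon ℓ (m + 1)
  | 0, hk => by
    have hpath : A.IsInducedPath (fun _ => ⟨0, by omega⟩) 0 :=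
      ⟨fun _ _ _ _ _ => by simp_all, fun s hs => absurd hs (Nat.not_lt_zero s)⟩
    obtain ⟨j, hj⟩ := hpath.exists_isInducedPolygon_update hm3 hk
    exact ⟨_, hj⟩
  | m + 1, hk => by
    obtain ⟨ℓ, hℓ⟩ := exists_isInducedPolygon hm3 m (by omega)
    obtain ⟨j, hj⟩ := hℓ.exists_isInducedPolygon_update hm3 hk
    exact ⟨_, hj⟩

theorem IsInducedPolygon.meet_mem_iff (h : A.IsInducedPolygon ℓ m) (s u : Fin (m + 1)) :
    A.meet (ℓ s) (ℓ ↑(s + 1)) ∈ A.line (ℓ u) ↔ u = s ∨ u = s + 1 := by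
  refine ⟨fun hmem => ?_, by rintro (rfl | rfl); exacts [A.meet_mem_left _ _, A.meet_mem_right _ _]⟩
  rw [Fin.eq_add_one_iff_val, Fin.ext_iff]
  rw [Fin.val_add_one] at hmem
  split_ifs at hmem with hs
  · subst hs
    rw [Fin.val_last] at hmem ⊢
    by_contra hu
    exact h.meet_last_not_mem u (by omega) (by omega) hmem
  · rw [Fin.ext_iff, Fin.val_last] at hs
    have := h.eq_of_meet_mem s (by omega) u (Fin.is_le u) hmem
    omega

theorem IsInducedPolygon.hasInducedCycle (h : A.IsInducedPolygon ℓ m) (hm : 2 ≤ m) :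
    HasInducedCycle A.levi (2 * m + 2) := by
  have hℓ : Function.Injective fun s : Fin (m + 1) => ℓ s :=
    fun s u hsu => Fin.ext (h.injOn (Fin.is_le s) (Fin.is_le u) hsu)
  have hsing : ∀ s : Fin (m + 1), A.meet (ℓ s) (ℓ ↑(s + 1)) ∈ A.sing := fun s =>
    A.meet_mem_sing fun hs => by
      have := Fin.eq_add_one_iff_val.1 (hℓ (a₁ := s) (a₂ := s + 1) hs)
      omega
  exact SimpleGraph.hasInducedCycle_of_alternating hm (fun s => Sum.inr (ℓ s))
    (fun s => Sum.inl ⟨_, hsing s⟩) (Sum.inr_injective.comp hℓ) (fun _ _ h => h)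
    (fun _ _ h => h) h.meet_mem_iff

end LineArrangement

theorem inducedCycles_t3_odd_general (k : ℕ) (hk : 5 ≤ k)
    (A : LineArrangement k)
    (hr : ∀ r : ℕ, 3 < r → A.t r = 0) :
    ∀ i : ℕ, 3 ≤ i → i ≤ (k + 9) / 4 → HasInducedCycle A.levi (2 * i) := by
  intro i hi hik
  obtain ⟨ℓ, hℓ⟩ := A.exists_isInducedPolygon (A.mult_le_three hr) (i - 2) (by omega)
  rw [show 2 * i = 2 * (i - 2 + 1) + 2 by omega]
  exact hℓ.hasInducedCycle (by omega)

/-- `k` odd, `k ≥ 5`, `t_3 ≠ 0` and `t_r = 0` for `r > 3`: the Levi graph has an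
induced cycle of length `2i` for every `3 ≤ i ≤ ⌊(k+9)/4⌋`. -/
theorem inducedCycles_t3_odd (k : ℕ) (hk : 5 ≤ k) (hodd : Odd k)
    (A : LineArrangement k)
    (ht3 : A.t 3 ≠ 0) (hr : ∀ r : ℕ, 3 < r → A.t r = 0) :
    ∀ i : ℕ, 3 ≤ i → i ≤ (k + 9) / 4 → HasInducedCycle A.levi (2 * i) :=
  inducedCycles_t3_odd_general k hk A hr
end
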